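/- Let u be three times continuously differentiable on an interval containing [z_{m-1}, z_{m+1}] with z_{m-1} < z_m < z_{m+1}, and suppose u restricted to each cell [z_{m-1}, z_m] and [z_m, z_{m+1}] is a quadratic polynomial with u and u' continuous at z_m. Then with h_{m-1/2} = z_m − z_{m-1}, h_{m+1/2} = z_{m+1} − z_m, φ_k = u'(z_k), ū_{m-1/2} = (1/h_{m-1/2})∫_{z_{m-1}}^{z_m} u, and ū_{m+1/2} = (1/h_{m+1/2})∫_{z_m}^{z_{m+1}} u, the compact relation (h_{m-1/2}/6)φ_{m-1} + ((h_{m-1/2}+h_{m+1/2})/3)φ_m + (h_{m+1/2}/6)φ_{m+1} = ū_{m+1/2} − ū_{m-1/2} holds. -/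
import Mathlib

open Polynomial

lemma quad_eq (p : Polynomial ℝ) (hp : p.natDegree ≤ 2) :
    p = C (p.coeff 0) + C (p.coeff 1) * X + C (p.coeff 2) * X ^ 2 := by
  ext n
  match n with
  | 0 => simp
  | 1 => simp
  | 2 => simp [coeff_X]
  | (k+3) =>
    rw [p.coeff_eq_zero_of_natDegree_lt (by omega)]
    simp [coeff_X, coeff_X_pow]

lemma quad_integral (a b c z0 z1 : ℝ) :
    (∫ z in z0..z1, (c + b * z + a * z ^ 2))
      = (c * z1 + b * z1 ^ 2 / 2 + a * z1 ^ 3 / 3)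
        - (c * z0 + b * z0 ^ 2 / 2 + a * z0 ^ 3 / 3) := by
  have : ∀ z : ℝ, HasDerivAt (fun z : ℝ => c * z + b * z ^ 2 / 2 + a * z ^ 3 / 3)
      (c + b * z + a * z ^ 2) z := by
    intro z
    have h1 : HasDerivAt (fun z : ℝ => c * z) c z := by
      simpa using (hasDerivAt_id z).const_mul c
    have h2 : HasDerivAt (fun z : ℝ => b * z ^ 2 / 2) (b * z) z := by
      have := ((hasDerivAt_pow 2 z).const_mul b).div_const 2
      simpa using this.congr_deriv (by ring)
    have h3 : HasDerivAt (fun z : ℝ => a * z ^ 3 / 3) (a * z ^ 2) z := by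
      have := ((hasDerivAt_pow 3 z).const_mul a).div_const 3
      simpa using this.congr_deriv (by ring)
    exact (h1.add h2).add h3
  rw [intervalIntegral.integral_eq_sub_of_hasDerivAt (fun z _ => this z)]
  · exact (Continuous.intervalIntegrable (by continuity) _ _)

theorem compact_FV_relation (z0 z1 z2 : ℝ) (h01 : z0 < z1) (h12 : z1 < z2)
    (p q : Polynomial ℝ) (hp : p.natDegree ≤ 2) (hq : q.natDegree ≤ 2)
    (hc : p.eval z1 = q.eval z1)
    (hc' : p.derivative.eval z1 = q.derivative.eval z1) :
    ((z1 - z0) / 6) * p.derivative.eval z0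
      + (((z1 - z0) + (z2 - z1)) / 3) * p.derivative.eval z1
      + ((z2 - z1) / 6) * q.derivative.eval z2
    = (1 / (z2 - z1)) * (∫ z in z1..z2, q.eval z)
      - (1 / (z1 - z0)) * (∫ z in z0..z1, p.eval z) := by
  have hp2 := quad_eq p hp
  have hq2 := quad_eq q hq
  set a := p.coeff 2; set b := p.coeff 1; set c := p.coeff 0
  set a' := q.coeff 2; set b' := q.coeff 1; set c' := q.coeff 0
  rw [hp2] at hc hc' ⊢
  rw [hq2] at hc hc' ⊢
  simp only [derivative_add, derivative_mul, derivative_C, derivative_X, derivative_pow,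
    eval_add, eval_mul, eval_C, eval_X, eval_pow, eval_zero, eval_one, mul_zero, zero_mul,
    mul_one, one_mul, zero_add, add_zero, Nat.cast_ofNat, pow_one] at hc hc' ⊢
  have hip : (∫ z in z0..z1, (c + b * z + a * z ^ 2))
      = (c * z1 + b * z1 ^ 2 / 2 + a * z1 ^ 3 / 3)
        - (c * z0 + b * z0 ^ 2 / 2 + a * z0 ^ 3 / 3) := quad_integral a b c z0 z1
  have hiq : (∫ z in z1..z2, (c' + b' * z + a' * z ^ 2))
      = (c' * z2 + b' * z2 ^ 2 / 2 + a' * z2 ^ 3 / 3)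
        - (c' * z1 + b' * z1 ^ 2 / 2 + a' * z1 ^ 3 / 3) := quad_integral a' b' c' z1 z2
  rw [hip, hiq]
  have h01' : z1 - z0 ≠ 0 := by linarith
  have h12' : z2 - z1 ≠ 0 := by linarith
  rw [one_div, one_div, inv_mul_eq_div, inv_mul_eq_div, div_sub_div _ _ h12' h01',
    eq_div_iff (mul_ne_zero h12' h01')]
  linear_combination ((z1 - z0) * (z2 - z1)) * hc + ((z1 - z0) * (z2 - z1) ^ 2 / 3) * hc'
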